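/- arXiv:1610.06274 — 6 statements merged into one kernel-verified Lean document; each statement's English description precedes it below -/
import Mathlib

section
/- Let ρ > 0, p > 0, 0 ≤ v < 1, W = (1 - v²)^(-1/2), and h ≥ √(1 + p²/ρ²) + p/ρ. Define D = ρW, E = ρhW² - p, and m = ρhW²v. Then D > 0, E > 0, and E > √(D² + m²). -/
/-- Conservative variables of an admissible primitive state are admissible. -/
theorem stmt1 (ρ p h v W D m E : ℝ) (hρ : 0 < ρ) (hp : 0 < p)
    (hv0 : 0 ≤ v) (hv1 : v < 1)
    (hW : W = 1 / Real.sqrt (1 - v ^ 2))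
    (hh : h ≥ Real.sqrt (1 + p ^ 2 / ρ ^ 2) + p / ρ)
    (hD : D = ρ * W) (hE : E = ρ * h * W ^ 2 - p) (hm : m = ρ * h * W ^ 2 * v) :
    D > 0 ∧ E > 0 ∧ E > Real.sqrt (D ^ 2 + m ^ 2) := by
  have hv2 : 0 < 1 - v ^ 2 := by nlinarith
  have hsq : Real.sqrt (1 - v ^ 2) > 0 := Real.sqrt_pos.mpr hv2
  have hWpos : 0 < W := by rw [hW]; positivity
  have hWid : W ^ 2 * (1 - v ^ 2) = 1 := by
    rw [hW]
    rw [div_pow, one_pow, Real.sq_sqrt hv2.le]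
    field_simp
  have hW1 : 1 ≤ W ^ 2 := by nlinarith
  -- bound on ρ h
  have hsqr : Real.sqrt (1 + p ^ 2 / ρ ^ 2) ^ 2 = 1 + p ^ 2 / ρ ^ 2 :=
    Real.sq_sqrt (by positivity)
  have hsqnn : 0 ≤ Real.sqrt (1 + p ^ 2 / ρ ^ 2) := Real.sqrt_nonneg _
  have hρh : ρ * h - p ≥ ρ * Real.sqrt (1 + p ^ 2 / ρ ^ 2) := by
    have := mul_le_mul_of_nonneg_left hh hρ.le
    have hpρ : ρ * (p / ρ) = p := by field_simp
    nlinarith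
  have key : ρ ^ 2 * h ^ 2 - 2 * p * (ρ * h) - ρ ^ 2 ≥ 0 := by
    have h1 : (ρ * h - p) ^ 2 ≥ (ρ * Real.sqrt (1 + p ^ 2 / ρ ^ 2)) ^ 2 := by
      have hnn : 0 ≤ ρ * Real.sqrt (1 + p ^ 2 / ρ ^ 2) := by positivity
      nlinarith
    have h2 : (ρ * Real.sqrt (1 + p ^ 2 / ρ ^ 2)) ^ 2 = ρ ^ 2 + p ^ 2 := by
      rw [mul_pow, hsqr]; field_simp
    nlinarith
  have hs1 : Real.sqrt (1 + p ^ 2 / ρ ^ 2) ≥ 1 := by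
    have : 1 ≤ Real.sqrt (1 + p ^ 2 / ρ ^ 2) ^ 2 := by
      rw [hsqr]; have : 0 ≤ p ^ 2 / ρ ^ 2 := by positivity
      linarith
    nlinarith
  have hρhpos : ρ * h > p := by nlinarith [mul_le_mul_of_nonneg_left hs1 hρ.le]
  have hDpos : D > 0 := by rw [hD]; positivity
  have hEpos : E > 0 := by
    rw [hE]
    have h0 : 0 < ρ * h := hp.trans hρhpos
    have := mul_le_mul_of_nonneg_left hW1 h0.le
    linarith
  refine ⟨hDpos, hEpos, ?_⟩
  rw [show E = √(E^2) from (Real.sqrt_sq hEpos.le).symm]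
  apply Real.sqrt_lt_sqrt (by positivity)
  have id : (ρ*h*W^2-p)^2 - ((ρ*W)^2 + (ρ*h*W^2*v)^2)
      = W^2*(ρ^2*h^2 - 2*p*(ρ*h) - ρ^2) + p^2 + (ρ*h)^2*W^2*(W^2*(1-v^2)-1) := by ring
  rw [hWid] at id
  norm_num at id
  rw [hD, hE, hm]
  have hK : 0 ≤ W ^ 2 * (ρ ^ 2 * h ^ 2 - 2 * p * (ρ * h) - ρ ^ 2) :=
    mul_nonneg (sq_nonneg W) key
  linarith [pow_pos hp 2]
end

section
/- Let Υ be a symmetric positive definite 3×3 real matrix and let G_Υ = {(D, m, E) ∈ ℝ × ℝ³ × ℝ : D > 0 and E > √(D² + mᵀΥm)}. Then G_Υ is a convex set, and moreover λU' + (1−λ)U'' ∈ G_Υ for any U' ∈ G_Υ, U'' ∈ cl(G_Υ), and λ ∈ (0,1]. -/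
/-!
Cauchy–Schwarz for the positive semidefinite form `D D' + mᵀ Υ m'` makes
`(D, m) ↦ √(D² + mᵀ Υ m)` a seminorm, hence convex. So `G_Υ` is the intersection of the
half-space `D > 0` with a strict sublevel set of the convex function `√(D² + mᵀ Υ m) - E`:
it is convex and open, and a convex combination of an interior point with positive weight and
a point of the closure lies in the interior.
-/

open scoped Matrix

namespace LinearMap.BilinForm

variable {M : Type*} [AddCommGroup M] [Module ℝ M] (B : LinearMap.BilinForm ℝ M)

theorem sqrt_apply_add_le (hs : ∀ x, 0 ≤ B x x) (hB : LinearMap.IsSymm B) (x y : M) :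
    √(B (x + y) (x + y)) ≤ √(B x x) + √(B y y) := by
  have hxy : B y x = B x y := LinearMap.isSymm_def.1 hB y x
  have cauchy_schwarz : B x y ≤ √(B x x) * √(B y y) := by
    rw [← Real.sqrt_mul (hs x)]
    exact (le_abs_self _).trans (Real.abs_le_sqrt (B.apply_sq_le_of_symm hs hB x y))
  rw [Real.sqrt_le_left (by positivity)]
  calc B (x + y) (x + y) = B x x + 2 * B x y + B y y := by
        simp only [map_add, LinearMap.add_apply, hxy]; ring
    _ ≤ √(B x x) ^ 2 + 2 * (√(B x x) * √(B y y)) + √(B y y) ^ 2 := by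
        rw [Real.sq_sqrt (hs x), Real.sq_sqrt (hs y)]; linarith
    _ = (√(B x x) + √(B y y)) ^ 2 := by ring

theorem sqrt_apply_smul (a : ℝ) (x : M) : √(B (a • x) (a • x)) = ‖a‖ * √(B x x) := by
  rw [map_smul, map_smul, LinearMap.smul_apply, smul_eq_mul, smul_eq_mul, ← mul_assoc,
    Real.sqrt_mul (mul_self_nonneg a), Real.sqrt_mul_self_eq_abs, Real.norm_eq_abs]

noncomputable def sqrtSeminorm (hs : ∀ x, 0 ≤ B x x) (hB : LinearMap.IsSymm B) : Seminorm ℝ M :=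
  Seminorm.of (fun x => √(B x x)) (B.sqrt_apply_add_le hs hB) B.sqrt_apply_smul

theorem convexOn_sqrt_apply_self (hs : ∀ x, 0 ≤ B x x) (hB : LinearMap.IsSymm B) :
    ConvexOn ℝ Set.univ (fun x => √(B x x)) :=
  (B.sqrtSeminorm hs hB).convexOn

end LinearMap.BilinForm

theorem Convex.combo_mem_of_isOpen_of_mem_closure {E : Type*} [AddCommGroup E] [Module ℝ E]
    [TopologicalSpace E] [IsTopologicalAddGroup E] [ContinuousConstSMul ℝ E] {s : Set E}
    (hs : Convex ℝ s) (hso : IsOpen s) {x y : E} (hx : x ∈ s) (hy : y ∈ closure s) {a b : ℝ}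
    (ha : 0 < a) (hb : 0 ≤ b) (hab : a + b = 1) : a • x + b • y ∈ s := by
  rw [← hso.interior_eq] at hx ⊢
  exact hs.combo_interior_closure_mem_interior hx hy ha hb hab

section AdmissibleStates

variable {n : Type*} [Fintype n]

noncomputable def densityMomentumForm [DecidableEq n] (Y : Matrix n n ℝ) :
    LinearMap.BilinForm ℝ (ℝ × (n → ℝ)) :=
  (LinearMap.mul ℝ ℝ).compl₁₂ (LinearMap.fst ℝ ℝ (n → ℝ)) (LinearMap.fst ℝ ℝ (n → ℝ)) +
    (Matrix.toBilin' Y).compl₁₂ (LinearMap.snd ℝ ℝ (n → ℝ)) (LinearMap.snd ℝ ℝ (n → ℝ))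

@[simp]
theorem densityMomentumForm_apply [DecidableEq n] (Y : Matrix n n ℝ) (u v : ℝ × (n → ℝ)) :
    densityMomentumForm Y u v = u.1 * v.1 + u.2 ⬝ᵥ Y *ᵥ v.2 := by
  simp [densityMomentumForm, Matrix.toBilin'_apply']

theorem densityMomentumForm_self_nonneg [DecidableEq n] {Y : Matrix n n ℝ} (hY : Y.PosSemidef)
    (u : ℝ × (n → ℝ)) : 0 ≤ densityMomentumForm Y u u := by
  simpa using add_nonneg (mul_self_nonneg u.1) (hY.dotProduct_mulVec_nonneg u.2)

theorem isSymm_densityMomentumForm [DecidableEq n] {Y : Matrix n n ℝ} (hY : Y.IsSymm) :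
    LinearMap.IsSymm (densityMomentumForm Y) := by
  refine LinearMap.isSymm_def.2 fun u v => ?_
  simpa [mul_comm, Matrix.toBilin'_apply'] using
    (Matrix.isSymm_toBilin'_iff_isSymm.2 hY).eq u.2 v.2

def admissibleSet (Y : Matrix n n ℝ) : Set (ℝ × (n → ℝ) × ℝ) :=
  {U | 0 < U.1 ∧ √(U.1 ^ 2 + U.2.1 ⬝ᵥ Y *ᵥ U.2.1) < U.2.2}

theorem isOpen_admissibleSet (Y : Matrix n n ℝ) : IsOpen (admissibleSet Y) := by
  refine (isOpen_lt continuous_const continuous_fst).inter (isOpen_lt ?_ continuous_snd.snd)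
  fun_prop

theorem convex_admissibleSet {Y : Matrix n n ℝ} (hY : Y.PosSemidef) :
    Convex ℝ (admissibleSet Y) := by
  classical
  set B := densityMomentumForm Y
  have hB_symm : LinearMap.IsSymm B :=
    isSymm_densityMomentumForm (Matrix.isHermitian_iff_isSymm.1 hY.isHermitian)
  have hnorm : ConvexOn ℝ Set.univ fun U : ℝ × (n → ℝ) × ℝ => √(B (U.1, U.2.1) (U.1, U.2.1)) :=
    (B.convexOn_sqrt_apply_self (densityMomentumForm_self_nonneg hY) hB_symm).comp_linearMap
      (LinearMap.id.prodMap (LinearMap.fst ℝ (n → ℝ) ℝ))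
  have henergy : ConcaveOn ℝ Set.univ fun U : ℝ × (n → ℝ) × ℝ => U.2.2 :=
    ((LinearMap.snd ℝ (n → ℝ) ℝ).comp (LinearMap.snd ℝ ℝ _)).concaveOn convex_univ
  have hset : admissibleSet Y = {U | 0 < U.1} ∩
      {U | U ∈ Set.univ ∧ √(B (U.1, U.2.1) (U.1, U.2.1)) - U.2.2 < 0} := by
    ext U
    simp [admissibleSet, B, sq]
  rw [hset]
  exact (convex_halfSpace_gt (LinearMap.fst ℝ ℝ ((n → ℝ) × ℝ)).isLinear 0).inter
    ((hnorm.sub henergy).convex_lt 0)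

end AdmissibleStates

/-- The admissible state set G_Y in conservative variables is convex, and mixing a
point of G_Y with a point of its closure (with positive weight on the former)
stays in G_Y. -/
theorem stmt7 (Y : Matrix (Fin 3) (Fin 3) ℝ) (hY : Y.PosDef)
    (G : Set (ℝ × (Fin 3 → ℝ) × ℝ))
    (hG : G = {U : ℝ × (Fin 3 → ℝ) × ℝ | 0 < U.1 ∧
        Real.sqrt (U.1 ^ 2 + U.2.1 ⬝ᵥ Y.mulVec U.2.1) < U.2.2}) :
    Convex ℝ G ∧
    ∀ U' ∈ G, ∀ U'' ∈ closure G, ∀ t : ℝ, 0 < t → t ≤ 1 →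
      t • U' + (1 - t) • U'' ∈ G := by
  have hG : G = admissibleSet Y := hG
  subst hG
  have hconv := convex_admissibleSet hY.posSemidef
  exact ⟨hconv, fun U' hU' U'' hU'' t ht ht1 => hconv.combo_mem_of_isOpen_of_mem_closure
    (isOpen_admissibleSet Y) hU' hU'' ht (sub_nonneg.2 ht1) (add_sub_cancel t 1)⟩
end

section
/- Let 0 ≤ v < 1, 0 < c_s < 1, W = (1−v²)^(−1/2), and let ρ̂ > 0 satisfy the quadratic equation (1 − v²c_s²)ρ̂² − 2a(1 − c_s²)ρ̂ + (1 − c_s²)a² − c_s²(1 − v²)b = 0, where a = |ξⱼvʲ| ≥ 0 and b = ξⱼξʲ > 0 with a² ≤ v²b. Then (b − ρ̂²)c_s² = W²(ρ̂ − a)²(1 − c_s²), and consequently ρ̂ < √b. -/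
/-- The sharper characteristic-speed bound ρ̂ solves a quadratic equation,
which is equivalent to (b - ρ̂²)c_s² = W²(ρ̂ - a)²(1 - c_s²); consequently ρ̂ < √b. -/
theorem stmt12 (v cs a b ρhat W : ℝ) (hv0 : 0 ≤ v) (hv1 : v < 1)
    (hcs0 : 0 < cs) (hcs1 : cs < 1) (ha : 0 ≤ a) (hb : 0 < b)
    (hab : a ^ 2 ≤ v ^ 2 * b) (hρ : 0 < ρhat)
    (hW : W = 1 / Real.sqrt (1 - v ^ 2))
    (heq : (1 - v ^ 2 * cs ^ 2) * ρhat ^ 2 - 2 * a * (1 - cs ^ 2) * ρhat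
        + (1 - cs ^ 2) * a ^ 2 - cs ^ 2 * (1 - v ^ 2) * b = 0) :
    (b - ρhat ^ 2) * cs ^ 2 = W ^ 2 * (ρhat - a) ^ 2 * (1 - cs ^ 2) ∧
    ρhat < Real.sqrt b := by
  have hv2 : (0:ℝ) < 1 - v ^ 2 := by nlinarith
  have hW2 : W ^ 2 = 1 / (1 - v ^ 2) := by
    rw [hW, div_pow, one_pow, Real.sq_sqrt hv2.le]
  have key : (b - ρhat ^ 2) * cs ^ 2 * (1 - v ^ 2) = (ρhat - a) ^ 2 * (1 - cs ^ 2) := by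
    nlinarith [heq]
  have h1 : (b - ρhat ^ 2) * cs ^ 2 = W ^ 2 * (ρhat - a) ^ 2 * (1 - cs ^ 2) := by
    rw [hW2]; field_simp; linarith [key]
  refine ⟨h1, ?_⟩
  have hlt : ρhat ^ 2 < b := by
    rcases eq_or_ne ρhat a with h | h
    · nlinarith
    · have hne : ρhat - a ≠ 0 := sub_ne_zero.mpr h
      have hpos : (0:ℝ) < (ρhat - a) ^ 2 := pow_pos (abs_pos.mpr hne) 2 |>.trans_le (by rw [sq_abs])
      nlinarith [key, hpos, mul_pos (pow_pos hcs0 2) hv2, mul_pos hpos (sub_pos.mpr (by nlinarith : cs ^ 2 < 1))]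
  calc ρhat = Real.sqrt (ρhat ^ 2) := by rw [Real.sqrt_sq hρ.le]
    _ < Real.sqrt b := Real.sqrt_lt_sqrt (by positivity) hlt
end

section
/- Let 0 ≤ s ≤ v < 1, 0 < c_s < 1, W = (1 − v²)^(−1/2), and define ρ̂ = [s(1 − c_s²) + c_s(1 − v²)]/(1 − v²c_s²) (a lower bound of the sharp characteristic-speed bound with unit ξ). Then 1 − s/ρ̂ ≥ W⁻²c_s/(c_s + v) > W⁻²c_s/(c_s + 1) > 0. -/
/-- Positivity bound for 1 - s/ρ̂ with the sharper ideal-EOS characteristic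
speed bound (normalized, unit ξ). -/
theorem stmt13 (s v cs W ρhat : ℝ) (hs0 : 0 ≤ s) (hsv : s ≤ v) (hv : v < 1)
    (hcs0 : 0 < cs) (hcs1 : cs < 1)
    (hW : W = 1 / Real.sqrt (1 - v ^ 2))
    (hρ : ρhat = (s * (1 - cs ^ 2) + cs * (1 - v ^ 2)) / (1 - v ^ 2 * cs ^ 2)) :
    1 - s / ρhat ≥ (1 / W ^ 2) * cs / (cs + v) ∧
    (1 / W ^ 2) * cs / (cs + v) > (1 / W ^ 2) * cs / (cs + 1) ∧
    (1 / W ^ 2) * cs / (cs + 1) > 0 := by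
  have hv0 : 0 ≤ v := hs0.trans hsv
  have h1v : (0:ℝ) < 1 - v ^ 2 := by nlinarith
  have hW2 : 1 / W ^ 2 = 1 - v ^ 2 := by
    rw [hW, div_pow, one_pow, Real.sq_sqrt h1v.le]
    field_simp
  have hD : (0:ℝ) < 1 - v ^ 2 * cs ^ 2 := by nlinarith
  have hN : (0:ℝ) < s * (1 - cs ^ 2) + cs * (1 - v ^ 2) := by
    have h1 := mul_pos hcs0 h1v
    nlinarith [mul_nonneg hs0 (by nlinarith : (0:ℝ) ≤ 1 - cs ^ 2)]
  have hρpos : 0 < ρhat := by rw [hρ]; positivity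
  have hcv : (0:ℝ) < cs + v := by linarith
  refine ⟨?_, ?_, ?_⟩
  · have key : 1 - s / ρhat
        = cs * (1 - v ^ 2) * (1 - s * cs) / (s * (1 - cs ^ 2) + cs * (1 - v ^ 2)) := by
      rw [hρ]
      field_simp
      ring
    rw [hW2, key, ge_iff_le, div_le_div_iff₀ hcv hN]
    nlinarith [mul_nonneg (mul_pos hcs0 h1v).le
      (mul_nonneg (sub_nonneg.2 hsv) (by nlinarith : (0:ℝ) ≤ 1 + cs * v))]
  · rw [hW2]
    apply div_lt_div_of_pos_left (by nlinarith) hcv (by linarith)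
  · rw [hW2]; positivity
end

section
/- Let 1 < Γ ≤ 2, ρ > 0, p > 0, and h = 1 + Γp/((Γ−1)ρ), with sound speed c_s = √(Γp/(ρh)). Then 0 < c_s ≤ √(Γ−1), and ρh c_s/(1 + c_s) − p > p(Γ/(Γ−1+√(Γ−1)) − 1) ≥ 0. -/
/-!
Since `ρ h = ρ + Γ p / (Γ - 1)`, the squared sound speed `c_s² = Γ p / (ρ h)` is strictly below
`Γ - 1`. Using `ρ h c_s² = Γ p`, the energy term is `ρ h c_s / (1 + c_s) = Γ p / (c_s + c_s²)`,
which decreases in `c_s`; evaluating at `c_s = √(Γ - 1)` gives the bound `Γ p / (Γ - 1 + √(Γ - 1))`.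
Finally `√(Γ - 1) ≤ 1` for `Γ ≤ 2`, so this bound is at least `p`.
-/

lemma ideal_mul_enthalpy {Γ ρ p : ℝ} (hΓ : Γ ≠ 1) (hρ : ρ ≠ 0) :
    ρ * (1 + Γ * p / ((Γ - 1) * ρ)) = ρ + Γ * p / (Γ - 1) := by
  have : Γ - 1 ≠ 0 := sub_ne_zero.mpr hΓ
  field_simp

lemma ideal_soundSpeed_sq_lt {Γ ρ p : ℝ} (hΓ : 1 < Γ) (hρ : 0 < ρ) (hp : 0 ≤ p) :
    Γ * p / (ρ * (1 + Γ * p / ((Γ - 1) * ρ))) < Γ - 1 := by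
  have hΓ' : 0 < Γ - 1 := by linarith
  rw [ideal_mul_enthalpy hΓ.ne' hρ.ne', div_lt_iff₀ (by positivity), mul_add,
    mul_div_cancel₀ _ hΓ'.ne']
  nlinarith

lemma div_add_sq_lt_mul_div_one_add {a E c s : ℝ} (ha : 0 < a) (hc : 0 < c) (hcs : c < s)
    (hE : E * c ^ 2 = a) :
    a / (s + s ^ 2) < E * c / (1 + c) := by
  have hform : E * c / (1 + c) = a / (c + c ^ 2) := by
    rw [← hE]
    field_simp
  rw [hform]
  exact div_lt_div_of_pos_left ha (by positivity) (by nlinarith)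

lemma one_le_div_sub_one_add_sqrt {Γ : ℝ} (hΓ1 : 1 < Γ) (hΓ2 : Γ ≤ 2) :
    1 ≤ Γ / (Γ - 1 + Real.sqrt (Γ - 1)) := by
  have hs : Real.sqrt (Γ - 1) ≤ 1 := Real.sqrt_le_one.mpr (by linarith)
  rw [le_div_iff₀ (by positivity)]
  linarith

/-- For the ideal EOS with adiabatic index Γ ∈ (1,2]: 0 < c_s ≤ √(Γ-1) and
ρh c_s/(1+c_s) - p > p(Γ/(Γ-1+√(Γ-1)) - 1) ≥ 0. -/
theorem stmt14 (Γ ρ p h cs : ℝ) (hΓ1 : 1 < Γ) (hΓ2 : Γ ≤ 2)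
    (hρ : 0 < ρ) (hp : 0 < p)
    (hh : h = 1 + Γ * p / ((Γ - 1) * ρ))
    (hcs : cs = Real.sqrt (Γ * p / (ρ * h))) :
    0 < cs ∧ cs ≤ Real.sqrt (Γ - 1) ∧
    ρ * h * cs / (1 + cs) - p > p * (Γ / (Γ - 1 + Real.sqrt (Γ - 1)) - 1) ∧
    p * (Γ / (Γ - 1 + Real.sqrt (Γ - 1)) - 1) ≥ 0 := by
  have hΓ' : 0 < Γ - 1 := by linarith
  have hρh : 0 < ρ * h := by
    rw [hh, ideal_mul_enthalpy hΓ1.ne' hρ.ne']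
    positivity
  have hcs_sq_lt : Γ * p / (ρ * h) < Γ - 1 := hh ▸ ideal_soundSpeed_sq_lt hΓ1 hρ hp.le
  have hcs_pos : 0 < cs := hcs ▸ Real.sqrt_pos.mpr (by positivity)
  have hcs_lt : cs < Real.sqrt (Γ - 1) := hcs ▸ Real.sqrt_lt_sqrt (by positivity) hcs_sq_lt
  have hcs_sq : ρ * h * cs ^ 2 = Γ * p := by
    rw [hcs, Real.sq_sqrt (by positivity), mul_div_cancel₀ _ hρh.ne']
  have hbound := div_add_sq_lt_mul_div_one_add (by positivity) hcs_pos hcs_lt hcs_sq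
  rw [Real.sq_sqrt hΓ'.le, add_comm] at hbound
  refine ⟨hcs_pos, hcs_lt.le, ?_, ?_⟩
  · rw [mul_sub, mul_one, mul_div_assoc', mul_comm p Γ]
    linarith
  · nlinarith [one_le_div_sub_one_add_sqrt hΓ1 hΓ2]
end

section
/- Let 1 < Γ ≤ 2, ρ > 0, p > 0, h = 1 + Γp/((Γ−1)ρ), and c_s² = Γp/(ρh) < 1. Then (c_s²/(1 − c_s²))·(p² − 2ρp/(Γ−1) − p²/(Γ−1)²) + p² = (p²/((1−c_s²)(Γ−1)))·(Γ − 1 − c_s²(1/(Γ−1) + 2ρ/p)) < 0. -/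
/-- Final algebraic step of the sharper Lax–Friedrichs splitting for the
ideal EOS: the stated identity and strict negativity. -/
theorem stmt15 (Γ ρ p h cs2 : ℝ) (hΓ1 : 1 < Γ) (hΓ2 : Γ ≤ 2)
    (hρ : 0 < ρ) (hp : 0 < p)
    (hh : h = 1 + Γ * p / ((Γ - 1) * ρ))
    (hcs : cs2 = Γ * p / (ρ * h)) (hcs1 : cs2 < 1) :
    (cs2 / (1 - cs2)) * (p ^ 2 - 2 * ρ * p / (Γ - 1) - p ^ 2 / (Γ - 1) ^ 2) + p ^ 2
      = (p ^ 2 / ((1 - cs2) * (Γ - 1))) *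
          (Γ - 1 - cs2 * (1 / (Γ - 1) + 2 * ρ / p)) ∧
    (p ^ 2 / ((1 - cs2) * (Γ - 1))) *
        (Γ - 1 - cs2 * (1 / (Γ - 1) + 2 * ρ / p)) < 0 := by
  have hΓ : (0:ℝ) < Γ - 1 := by linarith
  have hne : Γ - 1 ≠ 0 := ne_of_gt hΓ
  have h1 : (0:ℝ) < 1 - cs2 := by linarith
  have h1ne : (1:ℝ) - cs2 ≠ 0 := ne_of_gt h1
  have hpne : p ≠ 0 := ne_of_gt hp
  have hh0 : 0 < h := by
    rw [hh]
    have : 0 < Γ * p / ((Γ - 1) * ρ) := by positivity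
    linarith
  constructor
  · field_simp
    ring
  · apply mul_neg_of_pos_of_neg
    · positivity
    · -- need Γ - 1 < cs2 * (1/(Γ-1) + 2ρ/p)
      rw [hcs]
      rw [hh] at *
      rw [div_add_div _ _ (ne_of_gt (by positivity : (0:ℝ) < Γ - 1)) hpne]
      have hd : (0:ℝ) < ρ * (1 + Γ * p / ((Γ - 1) * ρ)) := by positivity
      rw [div_mul_div_comm, sub_neg, lt_div_iff₀ (by positivity)]
      have key : (Γ - 1) * (ρ * (Γ - 1) + Γ * p) < Γ * (p + 2 * ρ * (Γ - 1)) := by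
        nlinarith [mul_nonneg (mul_pos hp (by linarith : (0:ℝ) < Γ)).le (by linarith : (0:ℝ) ≤ 2 - Γ), mul_pos (mul_pos hρ hΓ) (by linarith : (0:ℝ) < Γ + 1)]
      have hexp : ρ * (1 + Γ * p / ((Γ - 1) * ρ)) * ((Γ - 1) * p)
          = p * (ρ * (Γ - 1) + Γ * p) / (Γ - 1) * (Γ - 1) / 1 := by
        field_simp
      calc (Γ - 1) * (ρ * (1 + Γ * p / ((Γ - 1) * ρ)) * ((Γ - 1) * p))
          = p * ((Γ - 1) * (ρ * (Γ - 1) + Γ * p)) := by field_simp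
        _ < p * (Γ * (p + 2 * ρ * (Γ - 1))) := by
            exact mul_lt_mul_of_pos_left key hp
        _ = Γ * p * (1 * p + (Γ - 1) * (2 * ρ)) := by ring
end
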